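/- (Pointwise lower bound on a symmetrized convolution, from the proof of Lemma 3.9.) Let ℓ ≥ 2, n ≥ 1, 𝔾 = (ℤ/ℓℤ)^n, and let ν be a symmetric probability measure on 𝔾. Then for every x ∈ 𝔾: √(|𝔾| · (ν⋆ν)(x)) ≥ 1 − 2·d_TV(ν,π), where π is the uniform probability measure on 𝔾. -/
import Mathlib


open Finset

/-- The group `(ℤ/ℓℤ)^n`. -/
abbrev GG (ℓ n : ℕ) : Type := Fin n → ZMod ℓ

/-- The Dirichlet form of the interchange process on `𝔾 = (ℤ/ℓℤ)^n` with increment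
law `μ`. -/
noncomputable def ipFormG (ℓ n : ℕ) [NeZero ℓ] (μ : GG ℓ n → ℝ)
    (f : Equiv.Perm (GG ℓ n) → ℝ) : ℝ :=
  (1 / (2 * (Nat.factorial (Fintype.card (GG ℓ n)) : ℝ))) *
    ∑ σ : Equiv.Perm (GG ℓ n), ∑ x : GG ℓ n, ∑ z : GG ℓ n,
      μ z * (f (σ * Equiv.swap x (x + z)) - f σ) ^ 2

/-- Convolution of two measures on `(ℤ/ℓℤ)^n`. -/
noncomputable def conv {ℓ n : ℕ} [NeZero ℓ] (μ ν : GG ℓ n → ℝ) : GG ℓ n → ℝ :=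
  fun x => ∑ z : GG ℓ n, μ z * ν (x - z)

/-- `m`-fold self-convolution: `convIter μ 0` is the Dirac mass at `0` and
`convIter μ (m+1) = μ ⋆ convIter μ m`; in particular `convIter μ 1 = μ`. -/
noncomputable def convIter {ℓ n : ℕ} [NeZero ℓ] (μ : GG ℓ n → ℝ) : ℕ → (GG ℓ n → ℝ)
  | 0 => fun x => if x = 0 then 1 else 0
  | (m + 1) => conv μ (convIter μ m)

/-- The number of nonzero coordinates of `x`. -/
def suppCard {ℓ n : ℕ} (x : GG ℓ n) : ℕ :=
  (Finset.univ.filter fun i => x i ≠ 0).card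

/-- `ρ_k`, the uniform probability measure on the set of elements of `(ℤ/ℓℤ)^n`
with exactly `k` nonzero coordinates. -/
noncomputable def rho (ℓ n : ℕ) [NeZero ℓ] (k : ℕ) : GG ℓ n → ℝ :=
  fun x => if suppCard x = k
    then 1 / ((Finset.univ.filter fun y : GG ℓ n => suppCard y = k).card : ℝ)
    else 0

/-- `π`, the uniform probability measure on `(ℤ/ℓℤ)^n`. -/
noncomputable def unifG (ℓ n : ℕ) [NeZero ℓ] : GG ℓ n → ℝ :=
  fun _ => 1 / (Fintype.card (GG ℓ n) : ℝ)

/-- Total-variation distance between `ν` and the uniform measure `π` on `(ℤ/ℓℤ)^n`. -/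
noncomputable def dTV {ℓ n : ℕ} [NeZero ℓ] (ν : GG ℓ n → ℝ) : ℝ :=
  (1 / 2) * ∑ x : GG ℓ n, |ν x - 1 / (Fintype.card (GG ℓ n) : ℝ)|

theorem stmt15 (ℓ n : ℕ) [NeZero ℓ] (hℓ : 2 ≤ ℓ) (hn : 1 ≤ n)
    (ν : GG ℓ n → ℝ) (hnonneg : ∀ z, 0 ≤ ν z) (hsum : ∑ z : GG ℓ n, ν z = 1)
    (hsymm : ∀ z, ν (-z) = ν z) :
    ∀ x : GG ℓ n,
      1 - 2 * dTV ν ≤ Real.sqrt ((Fintype.card (GG ℓ n) : ℝ) * conv ν ν x) := by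
  intro x
  set N : ℝ := (Fintype.card (GG ℓ n) : ℝ) with hNdef
  have hshift : ∀ f : GG ℓ n → ℝ, ∑ z : GG ℓ n, f (z - x) = ∑ z : GG ℓ n, f z :=
    fun f => Fintype.sum_equiv (Equiv.subRight x) _ _ (fun z => rfl)
  have hconv : conv ν ν x = ∑ z : GG ℓ n, ν z * ν (z - x) := by
    unfold conv
    refine Finset.sum_congr rfl fun z _ => ?_
    rw [← hsymm (x - z), neg_sub]
  set T : ℝ := ∑ z : GG ℓ n, ν z * ν (z - x) with hTdef
  have hTnn : 0 ≤ T :=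
    Finset.sum_nonneg fun z _ => mul_nonneg (hnonneg z) (hnonneg _)
  -- Step 1: 1 - 2*dTV ≤ ∑ min
  have h1 : ∑ z : GG ℓ n, ν (z - x) = 1 := by
    rw [hshift ν]; exact hsum
  have h2 : ∑ z : GG ℓ n, |ν (z - x) - 1 / N| = 2 * dTV ν := by
    rw [hshift (fun z => |ν z - 1 / N|)]; unfold dTV; ring
  have h3 : ∑ z : GG ℓ n, |ν z - 1 / N| = 2 * dTV ν := by
    unfold dTV; ring
  have hmin : 1 - 2 * dTV ν ≤ ∑ z : GG ℓ n, min (ν z) (ν (z - x)) := by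
    have key : ∀ z : GG ℓ n,
        (ν z + ν (z - x) - (|ν z - 1 / N| + |ν (z - x) - 1 / N|)) / 2
          ≤ min (ν z) (ν (z - x)) := by
      intro z
      have habs : |ν z - ν (z - x)| ≤ |ν z - 1 / N| + |ν (z - x) - 1 / N| := by
        calc |ν z - ν (z - x)| = |(ν z - 1 / N) - (ν (z - x) - 1 / N)| := by ring_nf
        _ ≤ _ := abs_sub _ _
      rcases le_total (ν z) (ν (z - x)) with h | h
      · rw [min_eq_left h]
        have := abs_sub_le_iff.mp habs
        have h4 := abs_nonneg (ν z - ν (z - x))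
        rw [abs_of_nonpos (by linarith : ν z - ν (z - x) ≤ 0)] at habs
        linarith
      · rw [min_eq_right h]
        rw [abs_of_nonneg (by linarith : 0 ≤ ν z - ν (z - x))] at habs
        linarith
    have := Finset.sum_le_sum (fun z (_ : z ∈ Finset.univ) => key z)
    have hlhs : ∑ z : GG ℓ n,
        (ν z + ν (z - x) - (|ν z - 1 / N| + |ν (z - x) - 1 / N|)) / 2
        = 1 - 2 * dTV ν := by
      have hre : ∑ z : GG ℓ n,
          (ν z + ν (z - x) - (|ν z - 1 / N| + |ν (z - x) - 1 / N|)) / 2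
          = ((∑ z : GG ℓ n, ν z) + (∑ z : GG ℓ n, ν (z - x))
            - ((∑ z : GG ℓ n, |ν z - 1 / N|)
              + (∑ z : GG ℓ n, |ν (z - x) - 1 / N|))) / 2 := by
        rw [← Finset.sum_add_distrib, ← Finset.sum_add_distrib,
          ← Finset.sum_sub_distrib, ← Finset.sum_div]
      rw [hre, hsum, h1, h2, h3]; ring
    calc 1 - 2 * dTV ν = _ := hlhs.symm
      _ ≤ _ := this
  -- Step 2: ∑ min ≤ ∑ sqrt
  have hsq : ∑ z : GG ℓ n, min (ν z) (ν (z - x))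
      ≤ ∑ z : GG ℓ n, Real.sqrt (ν z * ν (z - x)) := by
    refine Finset.sum_le_sum fun z _ => ?_
    have ha := hnonneg z
    have hb := hnonneg (z - x)
    have hm : 0 ≤ min (ν z) (ν (z - x)) := le_min ha hb
    rw [Real.le_sqrt hm (mul_nonneg ha hb)]
    rcases le_total (ν z) (ν (z - x)) with h | h
    · rw [min_eq_left h]; nlinarith
    · rw [min_eq_right h]; nlinarith
  -- Step 3: ∑ sqrt ≤ sqrt (N * T) by Cauchy-Schwarz
  have hcs : ∑ z : GG ℓ n, Real.sqrt (ν z * ν (z - x)) ≤ Real.sqrt (N * T) := by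
    set S : ℝ := ∑ z : GG ℓ n, Real.sqrt (ν z * ν (z - x)) with hSdef
    have hSnn : 0 ≤ S := Finset.sum_nonneg fun z _ => Real.sqrt_nonneg _
    rw [Real.le_sqrt hSnn (mul_nonneg (Nat.cast_nonneg _) hTnn)]
    have := sq_sum_le_card_mul_sum_sq
      (s := (Finset.univ : Finset (GG ℓ n)))
      (f := fun z => Real.sqrt (ν z * ν (z - x)))
    calc S ^ 2 ≤ (Finset.univ : Finset (GG ℓ n)).card *
          ∑ z : GG ℓ n, Real.sqrt (ν z * ν (z - x)) ^ 2 := this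
      _ = N * T := by
          rw [Finset.card_univ]
          congr 1
          refine Finset.sum_congr rfl fun z _ => ?_
          exact Real.sq_sqrt (mul_nonneg (hnonneg z) (hnonneg _))
  calc 1 - 2 * dTV ν ≤ ∑ z : GG ℓ n, min (ν z) (ν (z - x)) := hmin
    _ ≤ ∑ z : GG ℓ n, Real.sqrt (ν z * ν (z - x)) := hsq
    _ ≤ Real.sqrt (N * T) := hcs
    _ = Real.sqrt (N * conv ν ν x) := by rw [hconv]
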